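/- There exists a subgroup H of Ĝ of index 16 such that the range of the natural homomorphism Ĝ → Equiv.Perm (Ĝ ⧸ H) given by left multiplication on the cosets is isomorphic (as a group) to SL(2, 𝔽₇), the special linear group of 2×2 matrices of determinant 1 over the field with seven elements. -/
import Mathlib


namespace Stmt16

def a : FreeGroup (Fin 2) := FreeGroup.of 0
def b : FreeGroup (Fin 2) := FreeGroup.of 1

/-- The two relators of `π₁(Q) = ⟨a,b | a²bA²ba²BAB, a²BA³Ba²b³⟩`. -/
def rels : Set (FreeGroup (Fin 2)) :=
  { a^2 * b * (a⁻¹)^2 * b * a^2 * b⁻¹ * a⁻¹ * b⁻¹,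
    a^2 * b⁻¹ * (a⁻¹)^3 * b⁻¹ * a^2 * b^3 }

/-- The fundamental group `Ĝ = π₁(Q)` of the middle level `Q` between the diffeomorphic
connected sums `Q₁#S²×S²` and `Q₂#S²×S²`. -/
abbrev Ghat := PresentedGroup rels

/-! ### Auxiliary material -/

abbrev SL7 := Matrix.SpecialLinearGroup (Fin 2) (ZMod 7)

instance : DecidableEq SL7 := fun x y => decidable_of_iff (x.1 = y.1) (Subtype.ext_iff).symm

instance : Fact (Nat.Prime 7) := ⟨by norm_num⟩

/-- Image of the generator `a`. -/
def MA : SL7 := ⟨!![0, 1; 6, 5], by decide⟩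
/-- Image of the generator `b`. -/
def MB : SL7 := ⟨!![0, 2; 3, 6], by decide⟩

def fgen : Fin 2 → SL7 := ![MA, MB]

theorem rels_hold : ∀ r ∈ rels, FreeGroup.lift fgen r = 1 := by
  intro r hr
  rcases hr with h | h <;> subst h <;>
    simp only [a, b, map_mul, map_inv, map_pow, FreeGroup.lift_apply_of, fgen,
      Matrix.cons_val_zero, Matrix.cons_val_one, Matrix.head_cons] <;> decide

/-- The homomorphism `Ĝ → SL(2,7)`. -/
def φ : Ghat →* SL7 := PresentedGroup.toGroup rels_hold

/-- Upper unitriangular matrices. -/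
def Et (t : ZMod 7) : SL7 := ⟨!![1, t; 0, 1], by simp [Matrix.det_fin_two_of]⟩
/-- Lower unitriangular matrices. -/
def Ft (t : ZMod 7) : SL7 := ⟨!![1, 0; t, 1], by simp [Matrix.det_fin_two_of]⟩

theorem Et_pow (n : ℕ) : (Et 1) ^ n = Et (n : ZMod 7) := by
  induction n with
  | zero => decide
  | succ n ih =>
      rw [pow_succ, ih]
      apply Subtype.ext
      show (Et (n : ZMod 7)).1 * (Et 1).1 = (Et ((n + 1 : ℕ) : ZMod 7)).1
      simp [Et, Matrix.mul_fin_two, add_comm]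

theorem Ft_pow (n : ℕ) : (Ft 1) ^ n = Ft (n : ZMod 7) := by
  induction n with
  | zero => decide
  | succ n ih =>
      rw [pow_succ, ih]
      apply Subtype.ext
      show (Ft (n : ZMod 7)).1 * (Ft 1).1 = (Ft ((n + 1 : ℕ) : ZMod 7)).1
      simp [Ft, Matrix.mul_fin_two]

theorem Et_mem (t : ZMod 7) : Et t ∈ Subgroup.closure ({Et 1, Ft 1} : Set SL7) := by
  have h : Et t = (Et 1) ^ (t.val) := by rw [Et_pow, ZMod.natCast_val, ZMod.cast_id]
  rw [h]
  exact pow_mem (Subgroup.subset_closure (by simp)) _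

theorem Ft_mem (t : ZMod 7) : Ft t ∈ Subgroup.closure ({Et 1, Ft 1} : Set SL7) := by
  have h : Ft t = (Ft 1) ^ (t.val) := by rw [Ft_pow, ZMod.natCast_val, ZMod.cast_id]
  rw [h]
  exact pow_mem (Subgroup.subset_closure (by simp)) _

theorem tri (p q c d : ZMod 7) (hc : c ≠ 0) (hdet : p * d - q * c = 1) :
    !![p, q; c, d] = !![1, (p-1)*c⁻¹; 0, 1] * !![1, 0; c, 1] * !![1, (d-1)*c⁻¹; 0, 1] := by
  have hce : c * c⁻¹ = 1 := mul_inv_cancel₀ hc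
  rw [Matrix.mul_fin_two, Matrix.mul_fin_two]
  ext i j
  fin_cases i <;> fin_cases j <;>
    simp only [Matrix.of_apply, Matrix.cons_val', Matrix.cons_val_zero, Matrix.cons_val_one,
      Matrix.head_cons, Matrix.empty_val', Matrix.cons_val_fin_one, Matrix.head_fin_const,
      Fin.mk_zero, Fin.mk_one, Fin.isValue]
  · linear_combination (1 - p) * hce
  · linear_combination (-(q + (p - 1) * (d - 1) * c⁻¹)) * hce - c⁻¹ * hdet
  · ring
  · linear_combination (1 - d) * hce

theorem decomp (M : SL7) (hc : M.1 1 0 ≠ 0) :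
    M = Et ((M.1 0 0 - 1) * (M.1 1 0)⁻¹) * Ft (M.1 1 0) *
        Et ((M.1 1 1 - 1) * (M.1 1 0)⁻¹) := by
  have hdet : M.1 0 0 * M.1 1 1 - M.1 0 1 * M.1 1 0 = 1 := by
    rw [← Matrix.det_fin_two]; exact M.2
  refine Subtype.ext ?_
  show M.1 = (Et _).1 * (Ft _).1 * (Et _).1
  simp only [Et, Ft]
  rw [Matrix.eta_fin_two M.1]
  exact tri _ _ _ _ hc hdet

theorem closure_EF : Subgroup.closure ({Et 1, Ft 1} : Set SL7) = ⊤ := by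
  rw [eq_top_iff]
  intro M _
  by_cases hc : M.1 1 0 = 0
  · have hdet : M.1 0 0 * M.1 1 1 - M.1 0 1 * M.1 1 0 = 1 := by
      rw [← Matrix.det_fin_two]; exact M.2
    rw [hc, mul_zero, sub_zero] at hdet
    have hMF : (M * Ft 1).1 1 0 = M.1 1 1 := by
      show (M.1 * (Ft 1).1) 1 0 = _
      rw [Matrix.mul_apply, Fin.sum_univ_two]
      simp [Ft, hc]
    have hd : (M * Ft 1).1 1 0 ≠ 0 := by
      rw [hMF]
      intro h
      rw [h, mul_zero] at hdet
      exact absurd hdet (by decide)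
    have h1 : (M * Ft 1) ∈ Subgroup.closure ({Et 1, Ft 1} : Set SL7) := by
      rw [decomp _ hd]
      exact mul_mem (mul_mem (Et_mem _) (Ft_mem _)) (Et_mem _)
    have h2 := mul_mem h1 (inv_mem (Ft_mem 1))
    simpa using h2
  · rw [decomp _ hc]
    exact mul_mem (mul_mem (Et_mem _) (Ft_mem _)) (Et_mem _)

theorem phi_surj : Function.Surjective φ := by
  have hE : Et 1 ∈ φ.range := by
    refine ⟨PresentedGroup.of 1 * (PresentedGroup.of 0)⁻¹ * (PresentedGroup.of 0)⁻¹ *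
      PresentedGroup.of 1, ?_⟩
    simp only [map_mul, map_inv, φ, PresentedGroup.toGroup.of]
    decide
  have hF : Ft 1 ∈ φ.range := by
    refine ⟨PresentedGroup.of 0 * (PresentedGroup.of 1)⁻¹ * PresentedGroup.of 0 *
      PresentedGroup.of 0 * (PresentedGroup.of 1)⁻¹ * (PresentedGroup.of 0)⁻¹, ?_⟩
    simp only [map_mul, map_inv, φ, PresentedGroup.toGroup.of]
    decide
  rw [← MonoidHom.range_eq_top, eq_top_iff, ← closure_EF, Subgroup.closure_le]
  rintro x (rfl | rfl)
  · exact hE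
  · exact hF

/-- The order-21 subgroup of `SL(2,7)`: upper triangular matrices whose diagonal
entries are cube roots of unity. -/
def S : Subgroup SL7 where
  carrier := {M | M.1 1 0 = 0 ∧ (M.1 0 0) ^ 3 = 1}
  one_mem' := by decide
  mul_mem' := by
    rintro x y ⟨hx1, hx2⟩ ⟨hy1, hy2⟩
    constructor <;>
      simp only [Matrix.SpecialLinearGroup.coe_mul, Matrix.mul_apply, Fin.sum_univ_two,
        hx1, hy1, mul_zero, zero_mul, add_zero, zero_add] at *
    rw [mul_pow, hx2, hy2, one_mul]
  inv_mem' := by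
    rintro x ⟨hx1, hx2⟩
    have hdet := x.2
    rw [Matrix.det_fin_two, hx1, mul_zero, sub_zero] at hdet
    refine ⟨?_, ?_⟩
    · simp [Matrix.SpecialLinearGroup.coe_inv, Matrix.adjugate_fin_two, hx1]
    · simp only [Matrix.SpecialLinearGroup.coe_inv, Matrix.adjugate_fin_two,
        Matrix.cons_val', Matrix.cons_val_zero, Matrix.empty_val',
        Matrix.cons_val_fin_one, Matrix.head_fin_const]
      have h3 : (x.1 0 0) ^ 3 * (x.1 1 1) ^ 3 = 1 := by rw [← mul_pow, hdet, one_pow]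
      rw [hx2, one_mul] at h3
      exact h3

instance : DecidablePred (· ∈ S) := fun M =>
  decidable_of_iff (M.1 1 0 = 0 ∧ (M.1 0 0) ^ 3 = 1) Iff.rfl

set_option maxRecDepth 40000 in
theorem card_S : Nat.card S = 21 := by
  rw [Nat.card_eq_fintype_card]; decide

set_option maxRecDepth 40000 in
theorem card_SL7 : Nat.card SL7 = 336 := by
  rw [Nat.card_eq_fintype_card]; decide

theorem index_S : S.index = 16 := by
  have h := Subgroup.index_mul_card S
  rw [card_S, card_SL7] at h
  omega

def W1 : SL7 := ⟨!![0, 1; 6, 0], by decide⟩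
def W2 : SL7 := ⟨!![1, 0; 6, 1], by decide⟩

set_option maxRecDepth 40000 in
theorem core_triv_aux : ∀ y : SL7, (y.1 1 0 = 0 ∧ (y.1 0 0) ^ 3 = 1) →
    ((W1 * y * W1⁻¹).1 1 0 = 0 ∧ ((W1 * y * W1⁻¹).1 0 0) ^ 3 = 1) →
    ((W2 * y * W2⁻¹).1 1 0 = 0 ∧ ((W2 * y * W2⁻¹).1 0 0) ^ 3 = 1) → y = 1 := by decide

theorem core_triv (y : SL7) (h : ∀ w : SL7, w * y * w⁻¹ ∈ S) : y = 1 := by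
  have h0 := h 1
  rw [one_mul, inv_one, mul_one] at h0
  exact core_triv_aux y h0 (h W1) (h W2)

/-! ### Main theorem -/

theorem exists_index_sixteen_subgroup_with_coset_action_SL2_F7 :
    ∃ H : Subgroup Ghat, H.index = 16 ∧
      Nonempty ((MulAction.toPermHom Ghat (Ghat ⧸ H)).range ≃*
        Matrix.SpecialLinearGroup (Fin 2) (ZMod 7)) := by
  refine ⟨S.comap φ, ?_, ?_⟩
  · rw [Subgroup.index_comap_of_surjective _ phi_surj, index_S]
  · have hker : (MulAction.toPermHom Ghat (Ghat ⧸ S.comap φ)).ker = φ.ker := by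
      rw [← Subgroup.normalCore_eq_ker]
      apply le_antisymm
      · intro x hx
        have hx' : ∀ g : Ghat, g * x * g⁻¹ ∈ S.comap φ := hx
        rw [MonoidHom.mem_ker]
        apply core_triv
        intro w
        obtain ⟨g, rfl⟩ := phi_surj w
        have h1 : φ (g * x * g⁻¹) ∈ S := hx' g
        rwa [map_mul, map_mul, map_inv] at h1
      · rw [Subgroup.normal_le_normalCore]
        intro x hx
        rw [MonoidHom.mem_ker] at hx
        show φ x ∈ S
        rw [hx]
        exact S.one_mem
    exact ⟨(QuotientGroup.quotientKerEquivRange _).symm.trans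
      ((QuotientGroup.quotientMulEquivOfEq hker).trans
        (QuotientGroup.quotientKerEquivOfSurjective φ phi_surj))⟩

end Stmt16
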